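/- Let (T, Σ) be a measurable space, M a nonempty σ-bounded family of measures on Σ, X a Banach space, and θ a Young function satisfying the Δ₂-condition. Then for every strongly measurable f : T → X one has ‖f‖_{θ,M} < ∞ if and only if sup_{μ∈M} ∫_T θ(‖f(t)‖) dμ(t) < ∞; that is, H^θ(M,X) = H(M,X), where H(M,X) is the set of strongly measurable f with sup_{μ∈M} ∫_T θ(‖f‖) dμ < ∞. -/

import Mathlib

open MeasureTheory Filter Set

/-- A Young function: `θ u = ∫₀ᵘ χ(t) dt` for some non-decreasing, left-continuous
`χ : [0,∞) → [0,∞)` with `χ 0 = 0` which is not identically zero. -/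
def IsYoungFunction (θ : ℝ → ℝ) : Prop :=
  ∃ χ : ℝ → ℝ,
    (∀ t, 0 ≤ t → 0 ≤ χ t) ∧
    (∀ s t, 0 ≤ s → s ≤ t → χ s ≤ χ t) ∧
    (∀ t, 0 < t → Tendsto χ (nhdsWithin t (Set.Iio t)) (nhds (χ t))) ∧
    χ 0 = 0 ∧
    (∃ t, 0 ≤ t ∧ χ t ≠ 0) ∧
    (∀ u, 0 ≤ u → θ u = ∫ t in (0:ℝ)..u, χ t)

/-- The Δ₂-condition: there is `k > 0` with `θ(2t) ≤ k·θ(t)` for all `t ≥ 0`. -/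
def Delta2 (θ : ℝ → ℝ) : Prop :=
  ∃ k : ℝ, 0 < k ∧ ∀ t, 0 ≤ t → θ (2 * t) ≤ k * θ t

/-- A family `M` of measures is σ-bounded: `T = ⋃ᵢ Eᵢ` with the `Eᵢ` pairwise disjoint
measurable sets and `sup_{μ ∈ M} μ (Eᵢ) < ∞` for every `i`. -/
def SigmaBounded {T : Type*} [MeasurableSpace T] (M : Set (Measure T)) : Prop :=
  ∃ E : ℕ → Set T,
    (∀ i, MeasurableSet (E i)) ∧
    (Pairwise fun i j => Disjoint (E i) (E j)) ∧
    (⋃ i, E i) = Set.univ ∧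
    ∀ i, (⨆ μ ∈ M, μ (E i)) < ⊤

/-- The Luxemburg norm of `f` with respect to the Young function `θ` and the family
of measures `M` : `inf {k > 0 : sup_{μ ∈ M} ∫ θ(‖f‖/k) dμ ≤ 1}`. -/
noncomputable def luxNormM {T X : Type*} [MeasurableSpace T] [NormedAddCommGroup X]
    (θ : ℝ → ℝ) (M : Set (Measure T)) (f : T → X) : ENNReal :=
  sInf {k : ENNReal | 0 < k ∧ k ≠ ⊤ ∧
    ∀ μ ∈ M, ∫⁻ t, ENNReal.ofReal (θ (‖f t‖ / k.toReal)) ∂μ ≤ 1}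

/-!
Both directions compare `θ(‖f‖)` pointwise with `θ(‖f‖ / k)` and integrate. Since `θ(u)/u` is
non-decreasing, `θ(u / c) ≤ θ(u) / c` for `c ≥ 1`, so `c = 1 + sup_μ ∫ θ(‖f‖) dμ` is admissible in
the Luxemburg infimum. Conversely, iterating Δ₂ gives `θ(c u) ≤ C θ(u)` for every `c ≥ 0`, so an
admissible `k` yields `sup_μ ∫ θ(‖f‖) dμ ≤ C`.
-/

section YoungFunction

variable {χ θ : ℝ → ℝ} {a b : ℝ}

theorem intervalIntegrable_of_monotoneOn_Ici (hχ : MonotoneOn χ (Ici 0)) (ha : 0 ≤ a)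
    (hab : a ≤ b) : IntervalIntegrable χ volume a b :=
  (hχ.mono fun _ hz => ha.trans (uIcc_of_le hab ▸ hz).1).intervalIntegrable

theorem map_add_integral_eq_of_monotoneOn (hχ : MonotoneOn χ (Ici 0))
    (hrep : ∀ u, 0 ≤ u → θ u = ∫ t in (0:ℝ)..u, χ t) (ha : 0 ≤ a) (hab : a ≤ b) :
    θ a + ∫ t in a..b, χ t = θ b := by
  rw [hrep a ha, hrep b (ha.trans hab)]
  exact intervalIntegral.integral_add_adjacent_intervals
    (intervalIntegrable_of_monotoneOn_Ici hχ le_rfl ha)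
    (intervalIntegrable_of_monotoneOn_Ici hχ ha hab)

/-- `θ(u)/u` is non-decreasing, written without division. -/
theorem mul_map_le_mul_map_of_monotoneOn (hχ : MonotoneOn χ (Ici 0))
    (hrep : ∀ u, 0 ≤ u → θ u = ∫ t in (0:ℝ)..u, χ t) (ha : 0 ≤ a) (hab : a ≤ b) :
    b * θ a ≤ a * θ b := by
  have hθa : θ a ≤ a * χ a :=
    calc θ a = ∫ t in (0:ℝ)..a, χ t := hrep a ha
      _ ≤ ∫ _ in (0:ℝ)..a, χ a :=
          intervalIntegral.integral_mono_on ha (intervalIntegrable_of_monotoneOn_Ici hχ le_rfl ha)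
            intervalIntegrable_const fun z hz => hχ hz.1 ha hz.2
      _ = a * χ a := by simp
  have hχab : (b - a) * χ a ≤ ∫ t in a..b, χ t :=
    calc (b - a) * χ a = ∫ _ in a..b, χ a := by simp
      _ ≤ ∫ t in a..b, χ t :=
          intervalIntegral.integral_mono_on hab intervalIntegrable_const
            (intervalIntegrable_of_monotoneOn_Ici hχ ha hab) fun z hz => hχ ha (ha.trans hz.1) hz.1
  have hθb := map_add_integral_eq_of_monotoneOn hχ hrep ha hab
  nlinarith [mul_le_mul_of_nonneg_left hθa (sub_nonneg.2 hab), mul_le_mul_of_nonneg_left hχab ha]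

namespace IsYoungFunction

theorem map_zero (hθ : IsYoungFunction θ) : θ 0 = 0 := by
  obtain ⟨χ, -, -, -, -, -, hrep⟩ := hθ
  rw [hrep 0 le_rfl, intervalIntegral.integral_same]

theorem monotoneOn (hθ : IsYoungFunction θ) : MonotoneOn θ (Ici 0) := by
  obtain ⟨χ, hχ0, hχ, -, -, -, hrep⟩ := hθ
  intro a ha b _ hab
  rw [← map_add_integral_eq_of_monotoneOn (fun s hs t _ hst => hχ s t hs hst) hrep ha hab]
  exact le_add_of_nonneg_right
    (intervalIntegral.integral_nonneg hab fun t ht => hχ0 t ((show (0:ℝ) ≤ a from ha).trans ht.1))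

theorem map_div_le (hθ : IsYoungFunction θ) {c u : ℝ} (hc : 1 ≤ c) (hu : 0 ≤ u) :
    θ (u / c) ≤ c⁻¹ * θ u := by
  obtain rfl | hu := hu.eq_or_lt
  · simp [hθ.map_zero]
  obtain ⟨χ, -, hχ, -, -, -, hrep⟩ := hθ
  have hcpos : 0 < c := one_pos.trans_le hc
  have key := mul_map_le_mul_map_of_monotoneOn (fun s hs t _ hst => hχ s t hs hst) hrep
    (div_nonneg hu.le hcpos.le) (div_le_self hu.le hc)
  exact le_of_mul_le_mul_left (key.trans_eq (by ring)) hu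

end IsYoungFunction

end YoungFunction

theorem Delta2.exists_map_mul_le {θ : ℝ → ℝ} (hΔ : Delta2 θ) (hθ : MonotoneOn θ (Ici 0))
    {c : ℝ} (hc : 0 ≤ c) : ∃ C, 0 ≤ C ∧ ∀ t, 0 ≤ t → θ (c * t) ≤ C * θ t := by
  obtain ⟨k, hk, hk2⟩ := hΔ
  have hpow : ∀ n : ℕ, ∀ t, 0 ≤ t → θ (2 ^ n * t) ≤ k ^ n * θ t := by
    intro n
    induction n with
    | zero => simp
    | succ n ih =>
      intro t ht
      calc θ (2 ^ (n + 1) * t) = θ (2 * (2 ^ n * t)) := by ring_nf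
        _ ≤ k * θ (2 ^ n * t) := hk2 _ (mul_nonneg (by positivity) ht)
        _ ≤ k * (k ^ n * θ t) := mul_le_mul_of_nonneg_left (ih t ht) hk.le
        _ = k ^ (n + 1) * θ t := by ring
  obtain ⟨n, hn⟩ := pow_unbounded_of_one_lt c one_lt_two
  refine ⟨k ^ n, by positivity, fun t ht => ?_⟩
  calc θ (c * t) ≤ θ (2 ^ n * t) :=
        hθ (mul_nonneg hc ht) (mul_nonneg (by positivity) ht) (mul_le_mul_of_nonneg_right hn.le ht)
    _ ≤ k ^ n * θ t := hpow n t ht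

section Modular

variable {T X : Type*} [MeasurableSpace T] [NormedAddCommGroup X]

noncomputable def modularM (θ : ℝ → ℝ) (M : Set (Measure T)) (g : T → ℝ) : ENNReal :=
  ⨆ μ ∈ M, ∫⁻ t, ENNReal.ofReal (θ (g t)) ∂μ

theorem modularM_le_mul_of_le_mul {θ : ℝ → ℝ} {M : Set (Measure T)} {g h : T → ℝ} {C : ℝ}
    (hC : 0 ≤ C) (hgh : ∀ t, θ (g t) ≤ C * θ (h t)) :
    modularM θ M g ≤ ENNReal.ofReal C * modularM θ M h := by
  refine iSup₂_le fun μ hμ => ?_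
  calc ∫⁻ t, ENNReal.ofReal (θ (g t)) ∂μ
      ≤ ∫⁻ t, ENNReal.ofReal C * ENNReal.ofReal (θ (h t)) ∂μ :=
        lintegral_mono fun t => (ENNReal.ofReal_le_ofReal (hgh t)).trans_eq (ENNReal.ofReal_mul hC)
    _ = ENNReal.ofReal C * ∫⁻ t, ENNReal.ofReal (θ (h t)) ∂μ :=
        lintegral_const_mul' _ _ ENNReal.ofReal_ne_top
    _ ≤ ENNReal.ofReal C * modularM θ M h := by
        gcongr
        exact le_biSup (fun μ : Measure T => ∫⁻ t, ENNReal.ofReal (θ (h t)) ∂μ) hμ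

theorem luxNormM_lt_top_iff {θ : ℝ → ℝ} {M : Set (Measure T)} {f : T → X} :
    luxNormM θ M f < ⊤ ↔ ∃ k : ℝ, 0 < k ∧ modularM θ M (fun t => ‖f t‖ / k) ≤ 1 := by
  simp only [modularM, iSup₂_le_iff]
  constructor
  · intro h
    obtain ⟨k, ⟨hk, hk_top, hmod⟩, -⟩ := sInf_lt_iff.1 h
    exact ⟨k.toReal, ENNReal.toReal_pos hk.ne' hk_top, hmod⟩
  · rintro ⟨k, hk, hmod⟩
    refine lt_of_le_of_lt (sInf_le ⟨ENNReal.ofReal_pos.2 hk, ENNReal.ofReal_ne_top, ?_⟩)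
      ENNReal.ofReal_lt_top
    rwa [ENNReal.toReal_ofReal hk.le]

end Modular

theorem luxNorm_finite_iff_modular_finite_general {T X : Type*} [MeasurableSpace T]
    [NormedAddCommGroup X]
    (M : Set (Measure T))
    (θ : ℝ → ℝ) (hθ : IsYoungFunction θ) (hΔ : Delta2 θ)
    (f : T → X) :
    luxNormM θ M f < ⊤ ↔ (⨆ μ ∈ M, ∫⁻ t, ENNReal.ofReal (θ ‖f t‖) ∂μ) < ⊤ := by
  change _ ↔ modularM θ M (fun t => ‖f t‖) < ⊤
  rw [luxNormM_lt_top_iff]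
  constructor
  · rintro ⟨k, hk, hmod⟩
    obtain ⟨C, hC, hθC⟩ := hΔ.exists_map_mul_le hθ.monotoneOn hk.le
    calc modularM θ M (fun t => ‖f t‖)
        ≤ ENNReal.ofReal C * modularM θ M (fun t => ‖f t‖ / k) :=
          modularM_le_mul_of_le_mul hC fun t => by
            simpa only [mul_div_cancel₀ _ hk.ne'] using hθC (‖f t‖ / k) (by positivity)
      _ ≤ ENNReal.ofReal C * 1 := by gcongr
      _ < ⊤ := by simp
  · intro h
    set ρ := modularM θ M (fun t => ‖f t‖)
    have hc : 1 ≤ ρ.toReal + 1 := le_add_of_nonneg_left ENNReal.toReal_nonneg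
    refine ⟨ρ.toReal + 1, by positivity, ?_⟩
    calc modularM θ M (fun t => ‖f t‖ / (ρ.toReal + 1))
        ≤ ENNReal.ofReal (ρ.toReal + 1)⁻¹ * ρ :=
          modularM_le_mul_of_le_mul (by positivity) fun t => hθ.map_div_le hc (norm_nonneg _)
      _ ≤ 1 := by
          rw [ENNReal.ofReal_inv_of_pos (by positivity), mul_comm, ← div_eq_mul_inv]
          refine ENNReal.div_le_of_le_mul ?_
          rw [one_mul, ENNReal.ofReal_add ENNReal.toReal_nonneg zero_le_one,
            ENNReal.ofReal_toReal h.ne, ENNReal.ofReal_one]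
          exact le_self_add

/-- Under the Δ₂-condition, `H^θ(M,X) = H(M,X)` : a strongly measurable `f` has finite
Luxemburg norm iff `sup_{μ∈M} ∫ θ(‖f‖) dμ < ∞`. -/
theorem luxNorm_finite_iff_modular_finite {T X : Type*} [MeasurableSpace T]
    [NormedAddCommGroup X] [NormedSpace ℝ X] [CompleteSpace X]
    (M : Set (Measure T)) (hne : M.Nonempty) (hσ : SigmaBounded M)
    (θ : ℝ → ℝ) (hθ : IsYoungFunction θ) (hΔ : Delta2 θ)
    (f : T → X) (hmeas : StronglyMeasurable f) :
    luxNormM θ M f < ⊤ ↔ (⨆ μ ∈ M, ∫⁻ t, ENNReal.ofReal (θ ‖f t‖) ∂μ) < ⊤ :=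
  luxNorm_finite_iff_modular_finite_general M θ hθ hΔ f
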